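/- arXiv:1910.14665 — 2 statements merged into one kernel-verified Lean document; each statement's English description precedes it below -/
import Mathlib

section
/- Let (R, m) be a Noetherian local ring, I ⊆ m an ideal, and T = R[It, t^{-1}] the extended Rees algebra. Fix integers l > c ≥ 0 and an ideal J ⊆ R such that I^{l-c} ⊆ J. Let J' ⊆ T be the ideal generated by t^{-l}, all homogeneous elements of T of degree ≥ l, and J. Then the R-module homomorphism R/J → T/J' sending the class of 1 to the class of t^{-c} is a split injection of R-modules. -/
/-!
The splitting is the coefficient of `t⁻ᶜ`, read modulo `J`; it sends `t⁻ᶜ` to `1`, so everything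
comes down to showing that it kills `J'`, i.e. that the degree `-c` coefficient of every multiple
of a generator of `J'` lies in `J`. A generator is homogeneous, so such a coefficient is a single
product: for `t⁻ˡ` it is a coefficient of degree `l - c`, lying in `I ^ (l - c) ⊆ J`; for a
generator of degree `n ≥ l` it is a multiple of an element of `I ^ n ⊆ J`; for `r ∈ J` it is a
multiple of `r`.
-/

open LaurentPolynomial

/-- The extended Rees algebra `R[It, t⁻¹] = ⊕ₙ I^{max(n,0)} tⁿ ⊆ R[t, t⁻¹]`. -/
def extendedReesAlgebra (R : Type*) [CommRing R] (I : Ideal R) :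
    Subalgebra R (LaurentPolynomial R) where
  carrier := {p | ∀ n : ℤ, p.coeff n ∈ I ^ n.toNat}
  mul_mem' := by
    intro p q hp hq n
    classical
    rw [AddMonoidAlgebra.coeff_mul]
    simp only [Finsupp.sum]
    refine Submodule.sum_mem _ fun a _ => Submodule.sum_mem _ fun b _ => ?_
    split_ifs with h
    · subst h
      have h1 : p.coeff a * q.coeff b ∈ I ^ (a.toNat + b.toNat) := by
        rw [pow_add]; exact Ideal.mul_mem_mul (hp a) (hq b)
      exact Ideal.pow_le_pow_right (show (a + b).toNat ≤ a.toNat + b.toNat by omega) h1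
    · exact (I ^ n.toNat).zero_mem
  one_mem' := by
    intro n
    classical
    rw [AddMonoidAlgebra.one_def, AddMonoidAlgebra.coeff_single, Finsupp.single_apply]
    split_ifs with h
    · rw [← h, Int.toNat_zero, pow_zero, Ideal.one_eq_top]
      trivial
    · exact (I ^ n.toNat).zero_mem
  add_mem' := by
    intro p q hp hq n
    rw [AddMonoidAlgebra.coeff_add, Finsupp.add_apply]
    exact (I ^ n.toNat).add_mem (hp n) (hq n)
  zero_mem' := by intro n; rw [AddMonoidAlgebra.coeff_zero, Finsupp.coe_zero, Pi.zero_apply]; exact (I ^ n.toNat).zero_mem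
  algebraMap_mem' := by
    intro r n
    classical
    have hr : (algebraMap R (LaurentPolynomial R) r) = AddMonoidAlgebra.single (0 : ℤ) r := by
      simp [AddMonoidAlgebra.coe_algebraMap]
    rw [hr, AddMonoidAlgebra.coeff_single, Finsupp.single_apply]
    split_ifs with h
    · rw [← h, Int.toNat_zero, pow_zero, Ideal.one_eq_top]
      trivial
    · exact (I ^ n.toNat).zero_mem

lemma T_mem_extendedReesAlgebra {R : Type*} [CommRing R] (I : Ideal R) (n : ℤ) (hn : n ≤ 0) :
    (T n : LaurentPolynomial R) ∈ extendedReesAlgebra R I := by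
  intro m
  classical
  show (T n : LaurentPolynomial R).coeff m ∈ I ^ m.toNat
  rw [show (T n : LaurentPolynomial R) = AddMonoidAlgebra.single n 1 from rfl,
    AddMonoidAlgebra.coeff_single, Finsupp.single_apply]
  split_ifs with h
  · rw [show m.toNat = 0 by omega, pow_zero, Ideal.one_eq_top]
    trivial
  · exact (I ^ m.toNat).zero_mem

theorem LaurentPolynomial.coeff_mul_of_coeff_eq_zero {R : Type*} [Semiring R]
    {p q : R[T;T⁻¹]} {n : ℤ} (hq : ∀ k ≠ n, q.coeff k = 0) (m : ℤ) :
    (p * q).coeff m = p.coeff (m - n) * q.coeff n := by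
  have hq' : q = .single n (q.coeff n) := by
    ext k
    rw [AddMonoidAlgebra.coeff_single, Finsupp.single_apply]
    split_ifs with hk
    · rw [hk]
    · exact hq k (Ne.symm hk)
  conv_lhs => rw [hq']
  rw [AddMonoidAlgebra.coeff_mul_single_apply, sub_eq_add_neg]

theorem Ideal.span_toAddSubmonoid_le_of_mul_mem {A : Type*} [CommSemiring A] {S : Set A}
    {N : AddSubmonoid A} (h : ∀ s ∈ S, ∀ a, a * s ∈ N) : (Ideal.span S).toAddSubmonoid ≤ N := by
  rw [Ideal.span, Submodule.span_eq_closure, AddSubmonoid.closure_le]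
  rintro _ ⟨a, -, s, hs, rfl⟩
  exact h s hs a

theorem Ideal.Quotient.exists_splitting_of_functional {R A : Type*} [CommRing R] [CommRing A]
    [Algebra R A] {J : Ideal R} {J' : Ideal A} (φ : A →ₗ[R] R) (e : A) (he : φ e = 1)
    (hφ : ∀ x ∈ J', φ x ∈ J) (hJ : ∀ r ∈ J, algebraMap R A r ∈ J') :
    ∃ (f : (R ⧸ J) →ₗ[R] (A ⧸ J')) (g : (A ⧸ J') →ₗ[R] (R ⧸ J)),
      f (Ideal.Quotient.mk J 1) = Ideal.Quotient.mk J' e ∧ g ∘ₗ f = LinearMap.id := by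
  let f₀ : R →ₗ[R] A ⧸ J' :=
    (Ideal.Quotient.mkₐ R J').toLinearMap ∘ₗ LinearMap.toSpanSingleton R A e
  have hf₀ : J ≤ LinearMap.ker f₀ := fun r hr ↦ by
    change Ideal.Quotient.mk J' (r • e) = 0
    rw [Ideal.Quotient.eq_zero_iff_mem, Algebra.smul_def]
    exact J'.mul_mem_right e (hJ r hr)
  let g₀ : A →ₗ[R] R ⧸ J := J.mkQ ∘ₗ φ
  have hg₀ : J'.restrictScalars R ≤ LinearMap.ker g₀ := fun x hx ↦
    (Submodule.Quotient.mk_eq_zero J).mpr (hφ x hx)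
  refine ⟨J.liftQ f₀ hf₀, (J'.restrictScalars R).liftQ g₀ hg₀ ∘ₗ
    (Submodule.Quotient.restrictScalarsEquiv R J').symm.toLinearMap, ?_, ?_⟩
  · simp [f₀, ← Ideal.Quotient.mk_eq_mk]
  · ext
    simp [f₀, g₀, ← Ideal.Quotient.mk_eq_mk, he]

namespace extendedReesAlgebra

variable {R : Type*} [CommRing R] (I : Ideal R)

noncomputable def lcoeff (n : ℤ) : extendedReesAlgebra R I →ₗ[R] R :=
  Finsupp.lapply n ∘ₗ (AddMonoidAlgebra.coeffLinearEquiv R).toLinearMap ∘ₗ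
    (extendedReesAlgebra R I).val.toLinearMap

@[simp]
theorem lcoeff_apply (n : ℤ) (x : extendedReesAlgebra R I) :
    lcoeff I n x = (x : R[T;T⁻¹]).coeff n :=
  rfl

/-- The ideal `J' = (t⁻ˡ) + T_{≥ l} + J T`. -/
noncomputable def truncationIdeal (J : Ideal R) (l : ℕ) : Ideal (extendedReesAlgebra R I) :=
  Ideal.span ({⟨T (-l), T_mem_extendedReesAlgebra I (-l) (neg_nonpos.mpr l.cast_nonneg)⟩} ∪
    {p | ∃ n : ℤ, l ≤ n ∧ ∀ m ≠ n, (p : R[T;T⁻¹]).coeff m = 0} ∪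
    algebraMap R (extendedReesAlgebra R I) '' J)

variable {I}

theorem coeff_mul_mem_pow_of_coeff_eq_zero {p q : extendedReesAlgebra R I} {n : ℤ}
    (hq : ∀ k ≠ n, (q : R[T;T⁻¹]).coeff k = 0) (m : ℤ) :
    ((p * q : extendedReesAlgebra R I) : R[T;T⁻¹]).coeff m ∈ I ^ ((m - n).toNat + n.toNat) := by
  rw [Subalgebra.coe_mul, coeff_mul_of_coeff_eq_zero hq, pow_add]
  exact Ideal.mul_mem_mul (p.2 _) (q.2 n)

theorem algebraMap_mem_truncationIdeal {J : Ideal R} (l : ℕ) {r : R} (hr : r ∈ J) :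
    algebraMap R (extendedReesAlgebra R I) r ∈ truncationIdeal I J l :=
  Ideal.subset_span (Or.inr ⟨r, hr, rfl⟩)

theorem lcoeff_mem_of_mem_truncationIdeal {J : Ideal R} {c l : ℕ} (hIJ : I ^ (l - c) ≤ J)
    {x : extendedReesAlgebra R I} (hx : x ∈ truncationIdeal I J l) :
    lcoeff I (-c) x ∈ J := by
  refine Ideal.span_toAddSubmonoid_le_of_mul_mem
    (N := (Submodule.comap (lcoeff I (-c)) J).toAddSubmonoid) ?_ hx
  rintro s ((rfl | ⟨n, hn, hs⟩) | ⟨r, hr, rfl⟩) a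
  · have hT : ∀ k ≠ -(l : ℤ), (T (-(l : ℤ)) : R[T;T⁻¹]).coeff k = 0 := fun k hk ↦ by
      simp [T_apply, Ne.symm hk]
    exact hIJ (Ideal.pow_le_pow_right (by omega)
      (coeff_mul_mem_pow_of_coeff_eq_zero (p := a) hT (-c)))
  · exact hIJ (Ideal.pow_le_pow_right (by omega)
      (coeff_mul_mem_pow_of_coeff_eq_zero (p := a) hs (-c)))
  · change lcoeff I (-c) (a * algebraMap R _ r) ∈ J
    rw [mul_comm, ← Algebra.smul_def, LinearMap.map_smul_of_tower, smul_eq_mul]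
    exact J.mul_mem_right _ hr

end extendedReesAlgebra

/-- Let `(R,𝔪)` be Noetherian local, `I ⊆ 𝔪` an ideal, `T = R[It,t⁻¹]` the extended Rees
algebra, `l > c ≥ 0` integers and `J` an ideal with `I^(l-c) ⊆ J`. Let
`J' = (t⁻ˡ) + (homogeneous elements of degree ≥ l) + J·T`. Then the `R`-module map
`R/J → T/J'` sending the class of `1` to the class of `t⁻ᶜ` exists and is a split
injection of `R`-modules. -/
theorem extendedReesAlgebra_quotient_split_injection
    {R : Type*} [CommRing R] (I : Ideal R) (c l : ℕ) (J : Ideal R) (hIJ : I ^ (l - c) ≤ J) :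
    ∃ (f : (R ⧸ J) →ₗ[R] (extendedReesAlgebra R I ⧸ Ideal.span ({(⟨T (-(l : ℤ)), T_mem_extendedReesAlgebra I (-(l : ℤ)) (by omega)⟩ :
                extendedReesAlgebra R I)} ∪
            {p : extendedReesAlgebra R I | ∃ n : ℤ, (l : ℤ) ≤ n ∧
                ∀ m : ℤ, m ≠ n → (p : LaurentPolynomial R).coeff m = 0} ∪
            (algebraMap R (extendedReesAlgebra R I) '' (J : Set R)))))
      (g : (extendedReesAlgebra R I ⧸ Ideal.span ({(⟨T (-(l : ℤ)), T_mem_extendedReesAlgebra I (-(l : ℤ)) (by omega)⟩ :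
                extendedReesAlgebra R I)} ∪
            {p : extendedReesAlgebra R I | ∃ n : ℤ, (l : ℤ) ≤ n ∧
                ∀ m : ℤ, m ≠ n → (p : LaurentPolynomial R).coeff m = 0} ∪
            (algebraMap R (extendedReesAlgebra R I) '' (J : Set R)))) →ₗ[R] (R ⧸ J)),
      f (Ideal.Quotient.mk J 1)
          = Ideal.Quotient.mk _
              ⟨T (-(c : ℤ)), T_mem_extendedReesAlgebra I (-(c : ℤ)) (by omega)⟩ ∧
      g.comp f = (LinearMap.id : (R ⧸ J) →ₗ[R] (R ⧸ J)) :=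
  Ideal.Quotient.exists_splitting_of_functional (extendedReesAlgebra.lcoeff I (-c)) _
    (by simp [T_apply]) (fun _ ↦ extendedReesAlgebra.lcoeff_mem_of_mem_truncationIdeal hIJ)
    (fun _ ↦ extendedReesAlgebra.algebraMap_mem_truncationIdeal l)
end

section
/- Let B be a commutative ring and x_1, …, x_n ∈ B a regular sequence with (x_1, …, x_n)B ≠ B. Let B^◇ = (∏_{i∈ℕ} B)/(⊕_{i∈ℕ} B) be the quotient of the countable product of copies of B by the direct sum. Then the images of x_1, …, x_n (via the diagonal) form a regular sequence on B^◇, and (x_1, …, x_n)B^◇ ≠ B^◇. -/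
/-! An element `f` of `∏_ℕ B` lies in the ideal of `B^◇` generated by the diagonal images of
`x₁, …, xₙ` exactly when `f i ∈ (x₁, …, xₙ)` for all but finitely many `i` (finite generation lets
the coefficients be chosen componentwise). So the colon conditions defining regularity, being
implications between such memberships, pass from `B` to `B^◇`, and `1` cannot lie cofinitely in
the proper ideal `(x₁, …, xₙ)`. -/

/-- The ideal of eventually-zero (finitely supported) sequences in `∏_{ℕ} B`. -/
def eventuallyZeroIdeal (B : Type*) [CommRing B] : Ideal (ℕ → B) where
  carrier := {f | (Function.support f).Finite}
  zero_mem' := by simp [Function.support_zero]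
  add_mem' := by
    intro f g hf hg
    exact (hf.union hg).subset (Function.support_add f g)
  smul_mem' := by
    intro c f hf
    refine hf.subset ?_
    intro x hx
    rw [Function.mem_support] at hx ⊢
    intro h0
    exact hx (by simp [h0])

namespace Ideal

theorem pi_sup {ι : Type*} {R : ι → Type*} [∀ i, Semiring (R i)] (I J : ∀ i, Ideal (R i)) :
    pi (fun i => I i ⊔ J i) = pi I ⊔ pi J := by
  refine le_antisymm (fun f hf => ?_) (sup_le (pi_le_pi_iff.mpr fun _ => le_sup_left)
    (pi_le_pi_iff.mpr fun _ => le_sup_right))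
  choose a ha b hb hab using fun i => Submodule.mem_sup.mp (hf i)
  exact Submodule.mem_sup.mpr ⟨a, ha, b, hb, funext hab⟩

theorem pi_const_ofList {ι R : Type*} [Semiring R] (rs : List R) :
    pi (fun _ : ι => ofList rs) = ofList (rs.map fun r _ => r) := by
  induction rs with
  | nil => ext f; simp [mem_pi, funext_iff]
  | cons r rs ih => rw [List.map_cons, ofList_cons, ofList_cons, pi_sup, ih, pi_span]

theorem isSMulRegular_quotient_smul_top_iff {R : Type*} [CommRing R] (I : Ideal R) (x : R) :
    IsSMulRegular (R ⧸ (I • ⊤ : Submodule R R)) x ↔ ∀ b, x * b ∈ I → b ∈ I := by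
  rw [isSMulRegular_quotient_iff_mem_of_smul_mem, smul_eq_mul, mul_top]
  rfl

end Ideal

open Ideal Filter

section Diagonal

variable {B : Type*} [CommRing B]

theorem mem_eventuallyZeroIdeal_iff (f : ℕ → B) :
    f ∈ eventuallyZeroIdeal B ↔ ∀ᶠ i in cofinite, f i = 0 :=
  eventually_cofinite.symm

theorem mk_mem_map_pi_iff (I : Ideal B) (f : ℕ → B) :
    Ideal.Quotient.mk (eventuallyZeroIdeal B) f ∈ (pi fun _ => I).map (Ideal.Quotient.mk _) ↔
      ∀ᶠ i in cofinite, f i ∈ I := by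
  classical
  rw [mem_map_iff_of_surjective _ Ideal.Quotient.mk_surjective]
  constructor
  · rintro ⟨g, hg, hgf⟩
    rw [Ideal.Quotient.eq, mem_eventuallyZeroIdeal_iff] at hgf
    exact hgf.mono fun i hi => sub_eq_zero.mp hi ▸ hg i
  · intro hf
    refine ⟨fun i => if f i ∈ I then f i else 0, fun i => ?_, ?_⟩
    · by_cases h : f i ∈ I <;> simp [h]
    · rw [Ideal.Quotient.eq, mem_eventuallyZeroIdeal_iff]
      exact hf.mono fun i hi => by simp [hi]

theorem ofList_map_diagonal (rs : List B) :
    ofList (rs.map fun x => Ideal.Quotient.mk (eventuallyZeroIdeal B) (fun _ => x)) =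
      (pi fun _ => ofList rs).map (Ideal.Quotient.mk _) := by
  rw [pi_const_ofList, map_ofList, List.map_map]
  rfl

theorem mk_mem_ofList_map_diagonal_iff (rs : List B) (f : ℕ → B) :
    Ideal.Quotient.mk (eventuallyZeroIdeal B) f ∈
        ofList (rs.map fun x => Ideal.Quotient.mk (eventuallyZeroIdeal B) (fun _ => x)) ↔
      ∀ᶠ i in cofinite, f i ∈ ofList rs := by
  rw [ofList_map_diagonal, mk_mem_map_pi_iff]

theorem isSMulRegular_diagonal_quotient {rs : List B} {x : B}
    (hx : IsSMulRegular (B ⧸ (ofList rs • ⊤ : Submodule B B)) x) :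
    IsSMulRegular (((ℕ → B) ⧸ eventuallyZeroIdeal B) ⧸
        (ofList (rs.map fun x => Ideal.Quotient.mk (eventuallyZeroIdeal B) (fun _ => x)) • ⊤ :
          Submodule ((ℕ → B) ⧸ eventuallyZeroIdeal B) ((ℕ → B) ⧸ eventuallyZeroIdeal B)))
      (Ideal.Quotient.mk (eventuallyZeroIdeal B) (fun _ => x)) := by
  rw [isSMulRegular_quotient_smul_top_iff] at hx ⊢
  intro b hb
  obtain ⟨f, rfl⟩ := Ideal.Quotient.mk_surjective b
  rw [← map_mul, mk_mem_ofList_map_diagonal_iff] at hb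
  rw [mk_mem_ofList_map_diagonal_iff]
  exact hb.mono fun i hi => hx (f i) hi

end Diagonal

/-- Gabber's construction: if `x₁, …, xₙ` is a regular sequence on `B` generating a proper
ideal, then the diagonal images of the `xᵢ` form a regular sequence on
`B^◇ = (∏_ℕ B)/(⊕_ℕ B)`, generating a proper ideal. -/
theorem isWeaklyRegular_diagonal_ultraproduct
    (B : Type*) [CommRing B] (rs : List B)
    (hreg : RingTheory.Sequence.IsWeaklyRegular B rs)
    (hproper : Ideal.ofList rs ≠ ⊤) :
    RingTheory.Sequence.IsWeaklyRegular ((ℕ → B) ⧸ eventuallyZeroIdeal B)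
        (rs.map fun x => Ideal.Quotient.mk (eventuallyZeroIdeal B) (fun _ => x)) ∧
      Ideal.ofList
          (rs.map fun x => Ideal.Quotient.mk (eventuallyZeroIdeal B) (fun _ => x)) ≠ ⊤ := by
  constructor
  · refine ⟨fun i hi => ?_⟩
    rw [List.length_map] at hi
    rw [List.getElem_map, ← List.map_take]
    exact isSMulRegular_diagonal_quotient (hreg.regular_mod_prev i hi)
  · intro htop
    have hone := (mk_mem_ofList_map_diagonal_iff rs 1).mp (htop ▸ Submodule.mem_top)
    obtain ⟨_, hone⟩ := hone.exists
    exact hproper ((eq_top_iff_one _).mpr hone)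
end
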